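/- arXiv:2402.01482 — 5 statements merged into one kernel-verified Lean document; each statement's English description precedes it below -/
import Mathlib

section
/- Let F be a cumulative distribution function on [0,∞) and define δ(t) = ∫₀^∞ e^{-rt} dF(r) for t ≥ 0. Then δ satisfies the decreasing-impatience inequality δ(t+s) ≥ δ(t)·δ(s) for all t, s ≥ 0. -/
open MeasureTheory Real

section Chebyshev

variable {α : Type*} [MeasurableSpace α] {μ : Measure α} [IsProbabilityMeasure μ] {f g : α → ℝ}

/-- Chebyshev's integral inequality: integrate the rearrangement inequality
`f i * g j + f j * g i ≤ f i * g i + f j * g j` over `j`, then over `i`. -/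
theorem Monovary.integral_mul_integral_le_integral_mul (hfg : Monovary f g)
    (hf : Integrable f μ) (hg : Integrable g μ) (hfg_int : Integrable (fun x => f x * g x) μ) :
    (∫ x, f x ∂μ) * ∫ x, g x ∂μ ≤ ∫ x, f x * g x ∂μ := by
  set F := ∫ x, f x ∂μ
  set G := ∫ x, g x ∂μ
  set FG := ∫ x, f x * g x ∂μ
  have rearrangement_integral_right (i : α) : f i * G + F * g i ≤ f i * g i + FG := by
    have h := integral_mono ((hg.const_mul (f i)).add (hf.mul_const (g i)))
      ((integrable_const (f i * g i)).add hfg_int) fun j => hfg.mul_add_mul_le_mul_add_mul i j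
    simp only [Pi.add_apply] at h
    rwa [integral_add (hg.const_mul _) (hf.mul_const _), integral_add (integrable_const _) hfg_int,
      integral_const_mul, integral_mul_const, integral_const, probReal_univ, one_smul] at h
  have h := integral_mono ((hf.mul_const G).add (hg.const_mul F))
    (hfg_int.add (integrable_const FG)) rearrangement_integral_right
  simp only [Pi.add_apply] at h
  rw [integral_add (hf.mul_const _) (hg.const_mul _), integral_add hfg_int (integrable_const _),
    integral_const_mul, integral_mul_const, integral_const, probReal_univ, one_smul] at h
  linarith

end Chebyshev

theorem antitone_exp_neg_mul {t : ℝ} (ht : 0 ≤ t) : Antitone fun r : ℝ => exp (-r * t) :=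
  fun _ _ hxy => exp_le_exp.2 (by nlinarith)

theorem integrable_exp_neg_mul {μ : Measure ℝ} [IsFiniteMeasure μ] (hμ : ∀ᵐ r ∂μ, 0 ≤ r)
    {t : ℝ} (ht : 0 ≤ t) : Integrable (fun r => exp (-r * t)) μ := by
  refine Integrable.of_bound (by fun_prop) 1 ?_
  filter_upwards [hμ] with r hr
  rw [norm_of_nonneg (exp_pos _).le, exp_le_one_iff]
  nlinarith

/-- for a probability measure `μ` on `[0,∞)` (the law whose CDF is `F`),
the weighted discount function `δ t = ∫ e^{-r t} dF(r)` satisfies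
`δ (t+s) ≥ δ t * δ s` for all `t, s ≥ 0`. -/
theorem stmt0 (μ : Measure ℝ) [IsProbabilityMeasure μ]
    (hsupp : μ {r : ℝ | r < 0} = 0)
    (δ : ℝ → ℝ) (hδ : ∀ t, δ t = ∫ r, Real.exp (-r * t) ∂μ) :
    ∀ t s : ℝ, 0 ≤ t → 0 ≤ s → δ (t + s) ≥ δ t * δ s := by
  intro t s ht hs
  have hμ : ∀ᵐ r ∂μ, 0 ≤ r := by
    rw [ae_iff]
    simpa only [not_le] using hsupp
  have hprod := integrable_exp_neg_mul hμ (add_nonneg ht hs)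
  simp_rw [mul_add, exp_add] at hprod
  rw [ge_iff_le, hδ, hδ, hδ]
  simp_rw [mul_add, exp_add]
  exact ((antitone_exp_neg_mul ht).monovary (antitone_exp_neg_mul hs)).integral_mul_integral_le_integral_mul
    (integrable_exp_neg_mul hμ ht) (integrable_exp_neg_mul hμ hs) hprod
end

section
/- For r > 0, with a_h = 1 + rh + √(r²h² + 2rh) and x* > 0, lim_{h→0+} a_h^{⌊x*/√h⌋} = e^{√(2r)·x*}. -/
/-!
Substituting `t = √h` gives `a_h = b t` with `b t = 1 + r t² + t √(r² t² + 2r)`, so `b 0 = 1` and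
`b' 0 = √(2r)`. Hence `log (b t) / t → √(2r)`, while `⌊x* / t⌋ t → x*`, and the exponent
`⌊x* / t⌋ log (b t)` tends to `√(2r) x*`.
-/

open Real Filter Set Topology

theorem tendsto_nat_floor_div_mul_nhdsGT_zero {R : Type*} [TopologicalSpace R] [Field R]
    [LinearOrder R] [IsStrictOrderedRing R] [OrderTopology R] [FloorRing R] {x : R}
    (hx : 0 ≤ x) : Tendsto (fun t ↦ (⌊x / t⌋₊ : R) * t) (𝓝[>] 0) (𝓝 x) :=
  ((tendsto_nat_floor_mul_div_atTop hx).comp tendsto_inv_nhdsGT_zero).congr fun t ↦ by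
    simp [div_eq_mul_inv]

theorem hasDerivAt_id_mul_of_continuousAt {g : ℝ → ℝ} (hg : ContinuousAt g 0) :
    HasDerivAt (fun t ↦ t * g t) (g 0) 0 := by
  rw [hasDerivAt_iff_tendsto_slope]
  refine (hg.tendsto.mono_left nhdsWithin_le_nhds).congr' ?_
  filter_upwards [self_mem_nhdsWithin] with t (ht : t ≠ 0)
  simp [slope_def_field, ht]

theorem tendsto_pow_nat_floor_div_of_hasDerivAt {b : ℝ → ℝ} {c x : ℝ} (hx : 0 ≤ x)
    (hb₀ : b 0 = 1) (hb : HasDerivAt b c 0) :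
    Tendsto (fun t ↦ b t ^ ⌊x / t⌋₊) (𝓝[>] 0) (𝓝 (exp (c * x))) := by
  have hlog : HasDerivAt (fun t ↦ log (b t)) c 0 := by
    simpa [hb₀] using hb.log (by simp [hb₀])
  have hslope : Tendsto (fun t ↦ log (b t) / t) (𝓝[>] 0) (𝓝 c) := by
    simpa [hb₀, div_eq_inv_mul] using hlog.tendsto_slope_zero_right
  have hexponent : Tendsto (fun t ↦ (⌊x / t⌋₊ : ℝ) * log (b t)) (𝓝[>] 0) (𝓝 (c * x)) := by
    rw [mul_comm c]
    refine ((tendsto_nat_floor_div_mul_nhdsGT_zero hx).mul hslope).congr' ?_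
    filter_upwards [self_mem_nhdsWithin] with t (ht : 0 < t)
    field_simp
  have hb_pos : ∀ᶠ t in 𝓝[>] 0, 0 < b t :=
    nhdsWithin_le_nhds (hb.continuousAt.eventually (lt_mem_nhds (by simp [hb₀])))
  refine ((continuous_exp.tendsto _).comp hexponent).congr' ?_
  filter_upwards [hb_pos] with t ht
  simp [exp_nat_mul, exp_log ht]

theorem stmt4_general (r : ℝ) (xstar : ℝ) (hx : 0 < xstar)
    (a : ℝ → ℝ)
    (ha : ∀ h : ℝ, a h = 1 + r * h + Real.sqrt (r ^ 2 * h ^ 2 + 2 * r * h)) :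
    Tendsto (fun h : ℝ => a h ^ ⌊xstar / Real.sqrt h⌋₊)
      (nhdsWithin 0 (Ioi 0)) (nhds (Real.exp (Real.sqrt (2 * r) * xstar))) := by
  set b : ℝ → ℝ := fun t ↦ 1 + r * t ^ 2 + t * √(r ^ 2 * t ^ 2 + 2 * r)
  have hb : HasDerivAt b √(2 * r) 0 := by
    have hg : ContinuousAt (fun t : ℝ ↦ √(r ^ 2 * t ^ 2 + 2 * r)) 0 := by fun_prop
    exact (((hasDerivAt_const (0 : ℝ) (1 : ℝ)).add ((hasDerivAt_pow 2 0).const_mul r)).add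
      (hasDerivAt_id_mul_of_continuousAt hg)).congr_deriv (by simp)
  have hsqrt : Tendsto (√·) (𝓝[>] 0) (𝓝[>] 0) :=
    tendsto_nhdsWithin_of_tendsto_nhds_of_eventually_within _
      (by simpa using continuous_sqrt.tendsto 0 |>.mono_left nhdsWithin_le_nhds)
      (by filter_upwards [self_mem_nhdsWithin] with h hh using sqrt_pos.2 hh)
  refine ((tendsto_pow_nat_floor_div_of_hasDerivAt hx.le (by simp [b]) hb).comp hsqrt).congr' ?_
  filter_upwards [self_mem_nhdsWithin] with h (hh : 0 < h)
  have hab : b √h = a h := by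
    rw [ha, show r ^ 2 * h ^ 2 + 2 * r * h = h * (r ^ 2 * h + 2 * r) by ring,
      sqrt_mul hh.le]
    simp only [b, sq_sqrt hh.le]
  simp [hab]

/-- for `r > 0`, with `a_h = 1 + rh + √(r²h² + 2rh)` and `x* > 0`,
`a_h ^ ⌊x*/√h⌋ → e^{√(2r) x*}` as `h → 0+`. -/
theorem stmt4 (r : ℝ) (hr : 0 < r) (xstar : ℝ) (hx : 0 < xstar)
    (a : ℝ → ℝ)
    (ha : ∀ h : ℝ, a h = 1 + r * h + Real.sqrt (r ^ 2 * h ^ 2 + 2 * r * h)) :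
    Tendsto (fun h : ℝ => a h ^ ⌊xstar / Real.sqrt h⌋₊)
      (nhdsWithin 0 (Ioi 0)) (nhds (Real.exp (Real.sqrt (2 * r) * xstar))) :=
  stmt4_general r xstar hx a ha
end

section
/- Let F be a probability distribution supported on [1,2], ν ≥ -1/2, and λ = ∫₁² (√(ν² + 2r) + ν) dF(r). For h > 0 define Dₕ = ∫₁² (1 + rh - √(r²h² + (2r+ν²)h))/(1 + ν√h) dF(r) and a^h = K·(1 - Dₕ)/(e^{√h} - Dₕ) for a constant K > 0. Then lim_{h→0+} a^h = λK/(1+λ). -/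
/-!
Substituting `s = √h`, the square root in the integrand of `Dₕ` factors as
`s · √(r²s² + 2r + ν²)`, so that `(1 - Dₕ)/√h = (∫ g(s, r) dF(r)) / (1 + νs)` with
`g(s, r) = slopeIntegrand ν s r = ν - rs + √(r²s² + 2r + ν²)` jointly continuous.
As `F` has compact support, the integral is continuous in `s`, hence
`(1 - Dₕ)/√h → ∫ g(0, r) dF(r) = λ`. Dividing numerator and denominator of `a^h` by `√h`
and using `(e^s - 1)/s → 1` gives `a^h → Kλ/(1 + λ)`.
-/

open MeasureTheory Real Filter Set Topology

section CompactSupport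

variable {X Y E : Type*} [TopologicalSpace X] [MeasurableSpace X] [OpensMeasurableSpace X]
  [NormedAddCommGroup E] {μ : Measure X} {C : Set X}

lemma Continuous.integrable_of_measure_compl_eq_zero [T2Space X] [IsFiniteMeasureOnCompacts μ]
    (hC : IsCompact C) (hμC : μ Cᶜ = 0) {f : X → E} (hf : Continuous f) : Integrable f μ := by
  rw [← Measure.restrict_eq_self_of_ae_mem (mem_ae_iff.mpr hμC)]
  exact hf.continuousOn.integrableOn_compact hC

lemma continuous_integral_of_measure_compl_eq_zero [TopologicalSpace Y] [FirstCountableTopology Y]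
    [LocallyCompactSpace Y] [SecondCountableTopologyEither X E] [NormedSpace ℝ E]
    [IsLocallyFiniteMeasure μ] (hC : IsCompact C) (hμC : μ Cᶜ = 0) {f : Y → X → E}
    (hf : Continuous f.uncurry) : Continuous fun y => ∫ x, f y x ∂μ := by
  rw [← Measure.restrict_eq_self_of_ae_mem (mem_ae_iff.mpr hμC)]
  exact continuous_parametric_integral_of_continuous hf hC

end CompactSupport

lemma tendsto_exp_sub_one_div : Tendsto (fun x => (exp x - 1) / x) (𝓝[≠] 0) (𝓝 1) := by
  have h := (hasDerivAt_exp 0).tendsto_slope_zero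
  simp only [zero_add, exp_zero, smul_eq_mul] at h
  exact h.congr fun x => inv_mul_eq_div _ _

lemma tendsto_mul_one_sub_div_exp_sub {α : Type*} {l : Filter α} {u d : α → ℝ} {L : ℝ} (K : ℝ)
    (hu : Tendsto u l (𝓝[≠] 0)) (hd : Tendsto (fun x => (1 - d x) / u x) l (𝓝 L))
    (hL : 1 + L ≠ 0) :
    Tendsto (fun x => K * (1 - d x) / (exp (u x) - d x)) l (𝓝 (L * K / (1 + L))) := by
  have hlim := (hd.const_mul K).div ((tendsto_exp_sub_one_div.comp hu).add hd) hL
  rw [mul_comm L]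
  refine hlim.congr' ?_
  filter_upwards [hu self_mem_nhdsWithin] with x hx
  simp only [Pi.div_apply, Function.comp_apply]
  rw [← add_div, ← mul_div_assoc, div_div_div_cancel_right₀ hx, sub_add_sub_cancel]

noncomputable def slopeIntegrand (ν s r : ℝ) : ℝ := ν - r * s + √(r ^ 2 * s ^ 2 + 2 * r + ν ^ 2)

lemma continuous_uncurry_slopeIntegrand (ν : ℝ) :
    Continuous (Function.uncurry (slopeIntegrand ν)) := by
  unfold slopeIntegrand Function.uncurry
  fun_prop

lemma slopeIntegrand_zero (ν r : ℝ) : slopeIntegrand ν 0 r = √(ν ^ 2 + 2 * r) + ν := by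
  simp only [slopeIntegrand]
  ring_nf

lemma integrand_eq_one_sub_slopeIntegrand (ν r : ℝ) {h : ℝ} (hh : 0 ≤ h)
    (hc : 1 + ν * √h ≠ 0) :
    (1 + r * h - √(r ^ 2 * h ^ 2 + (2 * r + ν ^ 2) * h)) / (1 + ν * √h) =
      1 - √h * slopeIntegrand ν (√h) r / (1 + ν * √h) := by
  have hsqrt : √(r ^ 2 * h ^ 2 + (2 * r + ν ^ 2) * h) =
      √h * √(r ^ 2 * √h ^ 2 + 2 * r + ν ^ 2) := by
    rw [sq_sqrt hh, ← sqrt_mul hh]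
    ring_nf
  rw [hsqrt, slopeIntegrand, eq_sub_iff_add_eq, ← add_div, div_eq_one_iff_eq hc]
  linear_combination (-r) * sq_sqrt hh

lemma tendsto_sqrt_nhdsGT_zero : Tendsto (√·) (𝓝[>] 0) (𝓝[>] 0) := by
  refine tendsto_nhdsWithin_iff.mpr ⟨?_, ?_⟩
  · exact (continuous_sqrt.tendsto' 0 0 sqrt_zero).mono_left nhdsWithin_le_nhds
  · filter_upwards [self_mem_nhdsWithin] with h hh using sqrt_pos.mpr hh

section CompactlySupportedMeasure

variable {μ : Measure ℝ} [IsProbabilityMeasure μ] {C : Set ℝ}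

lemma one_sub_integral_div_sqrt_eq (hC : IsCompact C) (hμC : μ Cᶜ = 0) (ν : ℝ) {h : ℝ}
    (hh : 0 < h) (hc : 1 + ν * √h ≠ 0) :
    (1 - ∫ r, (1 + r * h - √(r ^ 2 * h ^ 2 + (2 * r + ν ^ 2) * h)) / (1 + ν * √h) ∂μ) / √h =
      (∫ r, slopeIntegrand ν (√h) r ∂μ) / (1 + ν * √h) := by
  have hint : Integrable (slopeIntegrand ν (√h)) μ :=
    ((continuous_uncurry_slopeIntegrand ν).uncurry_left _).integrable_of_measure_compl_eq_zero
      hC hμC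
  simp_rw [integrand_eq_one_sub_slopeIntegrand ν _ hh.le hc]
  rw [integral_sub (integrable_const 1) ((hint.const_mul _).div_const _), integral_const,
    integral_div, integral_const_mul]
  have hs : √h ≠ 0 := (sqrt_pos.mpr hh).ne'
  simp only [probReal_univ, smul_eq_mul, one_mul, sub_sub_cancel]
  field_simp

lemma tendsto_one_sub_integral_div_sqrt (hC : IsCompact C) (hμC : μ Cᶜ = 0) (ν : ℝ) :
    Tendsto (fun h => (1 - ∫ r, (1 + r * h - √(r ^ 2 * h ^ 2 + (2 * r + ν ^ 2) * h)) /
        (1 + ν * √h) ∂μ) / √h) (𝓝[>] 0) (𝓝 (∫ r, (√(ν ^ 2 + 2 * r) + ν) ∂μ)) := by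
  have hcont : Continuous fun s => ∫ r, slopeIntegrand ν s r ∂μ :=
    continuous_integral_of_measure_compl_eq_zero hC hμC (continuous_uncurry_slopeIntegrand ν)
  have hsqrt := tendsto_nhds_of_tendsto_nhdsWithin tendsto_sqrt_nhdsGT_zero
  have hden : Tendsto (fun h => 1 + ν * √h) (𝓝[>] 0) (𝓝 1) := by
    simpa using (hsqrt.const_mul ν).const_add 1
  have hlim := ((hcont.tendsto 0).comp hsqrt).div hden one_ne_zero
  simp only [slopeIntegrand_zero, div_one] at hlim
  refine hlim.congr' ?_
  filter_upwards [self_mem_nhdsWithin, hden.eventually_ne one_ne_zero] with h hh hc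
  exact (one_sub_integral_div_sqrt_eq hC hμC ν hh hc).symm

end CompactlySupportedMeasure

theorem stmt7_general (ν K : ℝ)
    (μ : Measure ℝ) [IsProbabilityMeasure μ] (hsupp : μ (Set.Icc (1:ℝ) 2)ᶜ = 0)
    (lam : ℝ) (hlam : lam = ∫ r, (Real.sqrt (ν ^ 2 + 2 * r) + ν) ∂μ)
    (D : ℝ → ℝ)
    (hD : ∀ h, D h = ∫ r,
        (1 + r * h - Real.sqrt (r ^ 2 * h ^ 2 + (2 * r + ν ^ 2) * h)) /
          (1 + ν * Real.sqrt h) ∂μ)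
    (a : ℝ → ℝ)
    (ha : ∀ h, a h = K * (1 - D h) / (Real.exp (Real.sqrt h) - D h)) :
    Tendsto a (nhdsWithin 0 (Ioi 0)) (nhds (lam * K / (1 + lam))) := by
  have hlam_nonneg : 0 ≤ lam := by
    rw [hlam]
    refine integral_nonneg_of_ae ?_
    filter_upwards [mem_ae_iff.mpr hsupp] with r hr
    exact neg_le_iff_add_nonneg'.mp (neg_sqrt_le_of_sq_le (by linarith [hr.1]))
  have hD_lim : Tendsto (fun h => (1 - D h) / √h) (𝓝[>] 0) (𝓝 lam) := by
    simpa only [hD, hlam] using tendsto_one_sub_integral_div_sqrt isCompact_Icc hsupp ν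
  rw [funext ha]
  exact tendsto_mul_one_sub_div_exp_sub K
    (tendsto_sqrt_nhdsGT_zero.mono_right (nhdsWithin_mono _ fun _ hx => ne_of_gt hx)) hD_lim
    (by linarith)

/-- with `F` a probability distribution supported on `[1,2]`, `ν ≥ -1/2`,
`λ = ∫ (√(ν²+2r)+ν) dF(r)`, `Dₕ = ∫ (1+rh-√(r²h²+(2r+ν²)h))/(1+ν√h) dF(r)` and
`a^h = K (1-Dₕ)/(e^{√h}-Dₕ)`, one has `a^h → λK/(1+λ)` as `h → 0+`. -/
theorem stmt7 (ν K : ℝ) (hν : ν ≥ -(1/2)) (hK : 0 < K)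
    (μ : Measure ℝ) [IsProbabilityMeasure μ] (hsupp : μ (Set.Icc (1:ℝ) 2)ᶜ = 0)
    (lam : ℝ) (hlam : lam = ∫ r, (Real.sqrt (ν ^ 2 + 2 * r) + ν) ∂μ)
    (D : ℝ → ℝ)
    (hD : ∀ h, D h = ∫ r,
        (1 + r * h - Real.sqrt (r ^ 2 * h ^ 2 + (2 * r + ν ^ 2) * h)) /
          (1 + ν * Real.sqrt h) ∂μ)
    (a : ℝ → ℝ)
    (ha : ∀ h, a h = K * (1 - D h) / (Real.exp (Real.sqrt h) - D h)) :
    Tendsto a (nhdsWithin 0 (Ioi 0)) (nhds (lam * K / (1 + lam))) :=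
  stmt7_general ν K μ hsupp lam hlam D hD a ha
end

section
/- Fix ν ≥ -1/2, K > 0, and let λ = ∫₁² (√(ν²+2r)+ν) dr > 0. Define η(z; ã) = (K-ã) ∫₁² (ã/z)^{√(ν²+2r)+ν} dr for 0 < ã < K and z ≥ ã. Then the right derivative ∂_z η(ã+; ã) = -((K-ã)/ã)·λ, and this quantity is ≥ -1 if and only if ã ≥ λK/(1+λ). -/
open MeasureTheory Real Set

/-! Writing `(a / z) ^ p = exp ((log a - log z) * p)` reduces the derivative to that of the
moment generating function `t ↦ ∫ exp (t p)` at `t = 0`, which is the mean `∫ p`; differentiating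
under the integral is justified by the boundedness of `p` on the finite measure space. The
equivalence is then a rearrangement of `(K - ã) λ ≤ ã`. -/

section IntegralExp

variable {α : Type*} [MeasurableSpace α] {μ : Measure α} [IsFiniteMeasure μ] {p : α → ℝ} {C : ℝ}

theorem hasDerivAt_integral_exp_mul (hp : AEStronglyMeasurable p μ) (hC : ∀ᵐ r ∂μ, ‖p r‖ ≤ C)
    (t : ℝ) :
    HasDerivAt (fun s => ∫ r, exp (s * p r) ∂μ) (∫ r, p r * exp (t * p r) ∂μ) t := by
  have hexp_meas : ∀ s, AEStronglyMeasurable (fun r => exp (s * p r)) μ := fun s =>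
    continuous_exp.comp_aestronglyMeasurable (hp.const_mul s)
  have hbound : ∀ᵐ r ∂μ, ∀ s ∈ Metric.ball t 1,
      ‖p r * exp (s * p r)‖ ≤ C * exp ((|t| + 1) * C) := by
    filter_upwards [hC] with r hr s hs
    have hs' : |s| ≤ |t| + 1 := by
      have := abs_sub_abs_le_abs_sub s t
      rw [Metric.mem_ball, dist_eq_norm, Real.norm_eq_abs] at hs
      linarith
    have hexp_le : exp (s * p r) ≤ exp ((|t| + 1) * C) := by
      refine exp_le_exp.mpr ((le_abs_self _).trans ?_)
      rw [abs_mul]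
      exact mul_le_mul hs' hr (abs_nonneg _) (by positivity)
    rw [norm_mul, Real.norm_of_nonneg (exp_pos _).le]
    exact mul_le_mul hr hexp_le (exp_pos _).le ((norm_nonneg _).trans hr)
  have hderiv : ∀ᵐ r ∂μ, ∀ s ∈ Metric.ball t 1,
      HasDerivAt (fun s => exp (s * p r)) (p r * exp (s * p r)) s := by
    refine Filter.Eventually.of_forall fun r s _ => ?_
    simpa [mul_comm] using ((hasDerivAt_id s).mul_const (p r)).exp
  have hint : Integrable (fun r => exp (t * p r)) μ := by
    refine .of_bound (hexp_meas t) (exp (|t| * C)) ?_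
    filter_upwards [hC] with r hr
    rw [Real.norm_of_nonneg (exp_pos _).le, exp_le_exp]
    calc t * p r ≤ |t * p r| := le_abs_self _
      _ ≤ |t| * C := by rw [abs_mul]; exact mul_le_mul_of_nonneg_left hr (abs_nonneg t)
  exact (hasDerivAt_integral_of_dominated_loc_of_deriv_le (Metric.ball_mem_nhds t one_pos)
    (.of_forall hexp_meas) hint (hp.mul (hexp_meas t)) hbound (integrable_const _) hderiv).2

theorem hasDerivAt_integral_div_rpow (hp : AEStronglyMeasurable p μ) (hC : ∀ᵐ r ∂μ, ‖p r‖ ≤ C)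
    {a : ℝ} (ha : 0 < a) :
    HasDerivAt (fun z => ∫ r, (a / z) ^ p r ∂μ) (-(∫ r, p r ∂μ) / a) a := by
  have hlog : HasDerivAt (fun z => log a - log z) (-a⁻¹) a :=
    (hasDerivAt_log ha.ne').const_sub (log a)
  have hcomp := (hasDerivAt_integral_exp_mul hp hC 0).comp_of_eq a hlog (sub_self _).symm
  simp only [zero_mul, exp_zero, mul_one] at hcomp
  rw [neg_div, div_eq_mul_inv, ← mul_neg]
  refine hcomp.congr_of_eventuallyEq ?_
  filter_upwards [lt_mem_nhds ha] with z hz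
  simp only [Function.comp, rpow_def_of_pos (div_pos ha hz), log_div ha.ne' hz.ne']

end IntegralExp

theorem neg_div_mul_ge_neg_one_iff {K a lam : ℝ} (ha : 0 < a) (hlam : 0 < 1 + lam) :
    -((K - a) / a) * lam ≥ -1 ↔ a ≥ lam * K / (1 + lam) := by
  rw [ge_iff_le, neg_mul, neg_le_neg_iff, div_mul_eq_mul_div, div_le_one ha, ge_iff_le,
    div_le_iff₀ hlam]
  constructor <;> intro h <;> linarith

theorem stmt9_general (ν K : ℝ)
    (lam : ℝ) (hlam : lam = ∫ r in Set.Icc (1:ℝ) 2, (Real.sqrt (ν ^ 2 + 2 * r) + ν))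
    (hlampos : 0 < lam)
    (η : ℝ → ℝ → ℝ)
    (hη : ∀ atil z, η atil z = (K - atil) *
        ∫ r in Set.Icc (1:ℝ) 2, (atil / z) ^ (Real.sqrt (ν ^ 2 + 2 * r) + ν))
    (atil : ℝ) (h0 : 0 < atil) :
    HasDerivWithinAt (η atil) (-((K - atil) / atil) * lam) (Set.Ici atil) atil ∧
    (-((K - atil) / atil) * lam ≥ -1 ↔ atil ≥ lam * K / (1 + lam)) := by
  have hp : Continuous fun r : ℝ => Real.sqrt (ν ^ 2 + 2 * r) + ν := by fun_prop
  obtain ⟨C, hC⟩ := (isCompact_Icc (a := (1:ℝ)) (b := 2)).exists_bound_of_continuousOn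
    hp.continuousOn
  have hderiv := hasDerivAt_integral_div_rpow (μ := volume.restrict (Icc (1:ℝ) 2))
    hp.aestronglyMeasurable (ae_restrict_of_forall_mem measurableSet_Icc hC) h0
  refine ⟨?_, neg_div_mul_ge_neg_one_iff h0 (by linarith)⟩
  rw [funext (hη atil), hlam, show ∀ x, -((K - atil) / atil) * x = (K - atil) * (-x / atil) by
    intro x; ring]
  exact (hderiv.const_mul _).hasDerivWithinAt

/-- with `λ = ∫₁² (√(ν²+2r)+ν) dr > 0` and
`η(z; ã) = (K-ã) ∫₁² (ã/z)^{√(ν²+2r)+ν} dr`, the right derivative of `z ↦ η(z; ã)`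
at `z = ã` equals `-((K-ã)/ã) λ`, and this is `≥ -1` iff `ã ≥ λK/(1+λ)`. -/
theorem stmt9 (ν K : ℝ) (hν : ν ≥ -(1/2)) (hK : 0 < K)
    (lam : ℝ) (hlam : lam = ∫ r in Set.Icc (1:ℝ) 2, (Real.sqrt (ν ^ 2 + 2 * r) + ν))
    (hlampos : 0 < lam)
    (η : ℝ → ℝ → ℝ)
    (hη : ∀ atil z, η atil z = (K - atil) *
        ∫ r in Set.Icc (1:ℝ) 2, (atil / z) ^ (Real.sqrt (ν ^ 2 + 2 * r) + ν))
    (atil : ℝ) (h0 : 0 < atil) (haK : atil < K) :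
    HasDerivWithinAt (η atil) (-((K - atil) / atil) * lam) (Set.Ici atil) atil ∧
    (-((K - atil) / atil) * lam ≥ -1 ↔ atil ≥ lam * K / (1 + lam)) :=
  stmt9_general ν K lam hlam hlampos η hη atil h0
end

section
/- Let σ : ℝ → ℝ satisfy σ(x) ≥ σ̲ > 0 for all x and have total variation bounded by C (i.e., Σₖ |σ(y_{k+1}) - σ(y_k)| ≤ C for every increasing sequence (y_k)). Define the grid recursively by x₀ = 0, d_{0,±} = σ(0)√h, and for k ≥ 1: x_k = x_{k-1} + d_{k-1,+}, d_{k,-} = d_{k-1,+}, d_{k,+} = σ²(x_k)h/d_{k,-} (symmetrically for k ≤ -1). Then σ(0)e^{-2C/σ̲}·√h ≤ d_{k,±} ≤ σ(0)e^{2C/σ̲}·√h for all k ∈ ℤ. -/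
/-!
Writing `u n = log d_n - log √h` and `v n = log σ(x_n)`, the recursion `d_{n+1} d_n = σ²(x_{n+1}) h`
becomes `u_{n+1} + u_n = 2 v_{n+1}` with `u_0 = v_0`. Hence `u_n - v_n` changes sign and moves by
`v_{n+1} - v_n` at each step, so `|u_n - v_0| ≤ 2 ∑ |v_{k+1} - v_k|`. Since `log` is
`1/σ̲`-Lipschitz on `[σ̲, ∞)`, the total variation of `v` along the increasing grid is at most `C/σ̲`.
On the negative side the grid is decreasing and is read backwards.
-/

open Real Finset

lemma Real.abs_log_sub_log_le {m a b : ℝ} (hm : 0 < m) (ha : m ≤ a) (hb : m ≤ b) :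
    |log a - log b| ≤ |a - b| / m := by
  have key : ∀ a b : ℝ, m ≤ a → m ≤ b → log a - log b ≤ |a - b| / m := by
    intro a b ha hb
    have ha0 : 0 < a := hm.trans_le ha
    have hb0 : 0 < b := hm.trans_le hb
    calc log a - log b = log (a / b) := (log_div ha0.ne' hb0.ne').symm
      _ ≤ a / b - 1 := log_le_sub_one_of_pos (div_pos ha0 hb0)
      _ = (a - b) / b := by field_simp
      _ ≤ |a - b| / m := div_le_div₀ (abs_nonneg _) (le_abs_self _) hm hb
  rw [abs_sub_le_iff]
  exact ⟨key a b ha hb, abs_sub_comm a b ▸ key b a hb ha⟩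

lemma Real.le_and_le_of_abs_log_sub_log_le {a b c : ℝ} (ha : 0 < a) (hb : 0 < b)
    (h : |log a - log b| ≤ c) : b * exp (-c) ≤ a ∧ a ≤ b * exp c := by
  rw [abs_le] at h
  constructor
  · rw [← log_le_log_iff (by positivity) ha, log_mul hb.ne' (exp_pos _).ne', log_exp]
    linarith
  · rw [← log_le_log_iff ha (by positivity), log_mul hb.ne' (exp_pos _).ne', log_exp]
    linarith

lemma sum_abs_log_sub_log_le {s : ℕ → ℝ} {m : ℝ} (hm : 0 < m) (hs : ∀ n, m ≤ s n) (n : ℕ) :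
    ∑ k ∈ range n, |log (s (k + 1)) - log (s k)| ≤ (∑ k ∈ range n, |s (k + 1) - s k|) / m := by
  rw [sum_div]
  exact sum_le_sum fun k _ => abs_log_sub_log_le hm (hs _) (hs _)

lemma abs_sub_le_two_mul_sum_abs_sub {u v : ℕ → ℝ} (h0 : u 0 = v 0)
    (hrec : ∀ n, u (n + 1) + u n = 2 * v (n + 1)) (n : ℕ) :
    |u n - v 0| ≤ 2 * ∑ k ∈ range n, |v (k + 1) - v k| := by
  have hdev : |u n - v n| ≤ ∑ k ∈ range n, |v (k + 1) - v k| := by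
    induction n with
    | zero => simp [h0]
    | succ n ih =>
      have : u (n + 1) - v (n + 1) = (v (n + 1) - v n) - (u n - v n) := by
        linarith [hrec n]
      rw [this, sum_range_succ]
      linarith [abs_sub (v (n + 1) - v n) (u n - v n)]
  have hdrift : |v n - v 0| ≤ ∑ k ∈ range n, |v (k + 1) - v k| := by
    rw [← sum_range_sub v n]
    exact abs_sum_le_sum_abs _ _
  calc |u n - v 0| = |(u n - v n) + (v n - v 0)| := by ring_nf
    _ ≤ |u n - v n| + |v n - v 0| := abs_add_le _ _
    _ ≤ 2 * ∑ k ∈ range n, |v (k + 1) - v k| := by linarith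

lemma pos_of_eq_div {D a : ℕ → ℝ} (h0 : 0 < D 0) (ha : ∀ n, 0 < a n)
    (hrec : ∀ n, D (n + 1) = a n / D n) (n : ℕ) : 0 < D n := by
  induction n with
  | zero => exact h0
  | succ n ih => rw [hrec n]; exact div_pos (ha n) ih

lemma spacing_mem_Icc_of_sum_abs_sub_le {s D : ℕ → ℝ} {m C h : ℝ} (hm : 0 < m) (hh : 0 < h)
    (hs : ∀ n, m ≤ s n) (hTV : ∀ n, ∑ k ∈ range n, |s (k + 1) - s k| ≤ C)
    (hD : ∀ n, 0 < D n) (hD0 : D 0 = s 0 * √h)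
    (hrec : ∀ n, D (n + 1) = s (n + 1) ^ 2 * h / D n) (n : ℕ) :
    D n ∈ Set.Icc (s 0 * exp (-(2 * C / m)) * √h) (s 0 * exp (2 * C / m) * √h) := by
  have hspos : ∀ n, 0 < s n := fun n => hm.trans_le (hs n)
  have hsqrt : 0 < √h := sqrt_pos.2 hh
  have hu0 : log (D 0) - log √h = log (s 0) := by
    rw [hD0, log_mul (hspos 0).ne' hsqrt.ne']; ring
  have hurec : ∀ n, (log (D (n + 1)) - log √h) + (log (D n) - log √h) = 2 * log (s (n + 1)) :=
    fun n => by
      have hprod : D (n + 1) * D n = s (n + 1) ^ 2 * √h ^ 2 := by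
        rw [hrec n, sq_sqrt hh.le, div_mul_cancel₀ _ (hD n).ne']
      have := congrArg log hprod
      rw [log_mul (hD _).ne' (hD n).ne', log_mul (pow_pos (hspos _) 2).ne' (pow_pos hsqrt 2).ne',
        log_pow, log_pow] at this
      push_cast at this
      linarith
  have hvar : ∑ k ∈ range n, |log (s (k + 1)) - log (s k)| ≤ C / m :=
    (sum_abs_log_sub_log_le hm hs n).trans (by gcongr; exact hTV n)
  have hlog : |log (D n) - log (s 0 * √h)| ≤ 2 * C / m :=
    calc |log (D n) - log (s 0 * √h)| = |(log (D n) - log √h) - log (s 0)| := by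
          rw [log_mul (hspos 0).ne' hsqrt.ne']; ring_nf
      _ ≤ 2 * ∑ k ∈ range n, |log (s (k + 1)) - log (s k)| :=
          abs_sub_le_two_mul_sum_abs_sub (u := fun n => log (D n) - log √h)
            (v := fun n => log (s n)) hu0 hurec n
      _ ≤ 2 * C / m := by rw [mul_div_assoc]; gcongr
  rw [Set.mem_Icc, mul_right_comm (s 0) (exp _), mul_right_comm (s 0) (exp _)]
  exact le_and_le_of_abs_log_sub_log_le (hD n) (mul_pos (hspos 0) hsqrt) hlog

lemma sum_abs_sub_comp_neg_le {f : ℝ → ℝ} {C : ℝ}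
    (hTV : ∀ y : ℕ → ℝ, StrictMono y → ∀ n, ∑ k ∈ range n, |f (y (k + 1)) - f (y k)| ≤ C)
    {x : ℤ → ℝ} (hx : StrictMono x) (n : ℕ) :
    ∑ k ∈ range n, |f (x (-(k + 1 : ℕ))) - f (x (-k))| ≤ C := by
  have hshift : StrictMono fun j : ℕ => x (j - n) :=
    hx.comp fun _ _ hij => sub_lt_sub_right (by exact_mod_cast hij) _
  calc ∑ k ∈ range n, |f (x (-(k + 1 : ℕ))) - f (x (-k))|
      = ∑ j ∈ range n, |f (x (-(n - 1 - j + 1 : ℕ))) - f (x (-(n - 1 - j : ℕ)))| :=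
        (sum_range_reflect _ n).symm
    _ = ∑ j ∈ range n, |f (x ((j + 1 : ℕ) - n)) - f (x (j - n))| := by
        refine sum_congr rfl fun j hj => ?_
        rw [mem_range] at hj
        rw [abs_sub_comm]
        congr 4 <;> omega
    _ ≤ C := hTV _ hshift n

lemma strictMono_of_eq_add_of_eq_sub {x dp dm : ℤ → ℝ} (hdp : ∀ n : ℕ, 0 < dp n)
    (hdm : ∀ n : ℕ, 0 < dm (-n)) (hpos : ∀ k : ℤ, 1 ≤ k → x k = x (k - 1) + dp (k - 1))
    (hneg : ∀ k : ℤ, k ≤ -1 → x k = x (k + 1) - dm (k + 1)) : StrictMono x :=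
  strictMono_int_of_lt_succ fun k => by
    rcases le_or_gt 0 k with hk | hk
    · lift k to ℕ using hk
      rw [hpos (k + 1) (by omega), add_sub_cancel_right]
      linarith [hdp k]
    · obtain ⟨n, hn⟩ : ∃ n : ℕ, k + 1 = -n := ⟨(-(k + 1)).toNat, by omega⟩
      rw [hneg k (by omega), hn]
      linarith [hdm n]

/-- if `σ ≥ σ̲ > 0` has total variation bounded by `C`, then the
recursively-defined grid spacings `d_{k,±}` satisfy
`σ(0) e^{-2C/σ̲} √h ≤ d_{k,±} ≤ σ(0) e^{2C/σ̲} √h` for all `k ∈ ℤ`. -/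
theorem stmt11 (σ : ℝ → ℝ) (σlow C h : ℝ) (hσlow : 0 < σlow) (hh : 0 < h)
    (hσ : ∀ x, σlow ≤ σ x)
    (hTV : ∀ y : ℕ → ℝ, StrictMono y →
      ∀ n : ℕ, ∑ k ∈ Finset.range n, |σ (y (k + 1)) - σ (y k)| ≤ C)
    (x dp dm : ℤ → ℝ)
    (hx0 : x 0 = 0)
    (hdp0 : dp 0 = σ 0 * Real.sqrt h) (hdm0 : dm 0 = σ 0 * Real.sqrt h)
    (hpos : ∀ k : ℤ, 1 ≤ k →
      x k = x (k - 1) + dp (k - 1) ∧ dm k = dp (k - 1) ∧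
        dp k = σ (x k) ^ 2 * h / dm k)
    (hneg : ∀ k : ℤ, k ≤ -1 →
      x k = x (k + 1) - dm (k + 1) ∧ dp k = dm (k + 1) ∧
        dm k = σ (x k) ^ 2 * h / dp k) :
    ∀ k : ℤ,
      σ 0 * Real.exp (-(2 * C / σlow)) * Real.sqrt h ≤ dp k ∧
      dp k ≤ σ 0 * Real.exp (2 * C / σlow) * Real.sqrt h ∧
      σ 0 * Real.exp (-(2 * C / σlow)) * Real.sqrt h ≤ dm k ∧
      dm k ≤ σ 0 * Real.exp (2 * C / σlow) * Real.sqrt h := by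
  have hσpos : ∀ t, 0 < σ t := fun t => hσlow.trans_le (hσ t)
  have hD0 : 0 < σ 0 * √h := mul_pos (hσpos 0) (sqrt_pos.2 hh)
  have hrecR : ∀ n : ℕ, dp (n + 1 : ℕ) = σ (x (n + 1 : ℕ)) ^ 2 * h / dp n := fun n => by
    obtain ⟨-, hdm, hdp⟩ := hpos (n + 1) (by omega)
    push_cast
    rw [hdp, hdm, add_sub_cancel_right]
  have hrecL : ∀ n : ℕ, dm (-(n + 1 : ℕ)) = σ (x (-(n + 1 : ℕ))) ^ 2 * h / dm (-n) := fun n => by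
    obtain ⟨-, hdp, hdm⟩ := hneg (-(n + 1)) (by omega)
    push_cast
    rw [hdm, hdp, show -((n : ℤ) + 1) + 1 = -n by ring]
  have hdp_pos : ∀ n : ℕ, 0 < dp n := pos_of_eq_div (by simpa [hdp0] using hD0)
    (fun _ => mul_pos (pow_pos (hσpos _) 2) hh) hrecR
  have hdm_pos : ∀ n : ℕ, 0 < dm (-n) := pos_of_eq_div (by simpa [hdm0] using hD0)
    (fun _ => mul_pos (pow_pos (hσpos _) 2) hh) hrecL
  have hx : StrictMono x := strictMono_of_eq_add_of_eq_sub hdp_pos hdm_pos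
    (fun k hk => (hpos k hk).1) (fun k hk => (hneg k hk).1)
  set I := Set.Icc (σ 0 * exp (-(2 * C / σlow)) * √h) (σ 0 * exp (2 * C / σlow) * √h)
  have hright : ∀ k : ℤ, 0 ≤ k → dp k ∈ I := fun k hk => by
    lift k to ℕ using hk
    simpa only [Nat.cast_zero, hx0] using
      spacing_mem_Icc_of_sum_abs_sub_le (s := fun n : ℕ => σ (x n)) hσlow hh (fun _ => hσ _)
        (hTV _ (hx.comp Nat.strictMono_cast))
        hdp_pos (by simp [hdp0, hx0]) hrecR k
  have hleft : ∀ k : ℤ, k ≤ 0 → dm k ∈ I := fun k hk => by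
    obtain ⟨n, rfl⟩ : ∃ n : ℕ, k = -n := ⟨k.natAbs, by omega⟩
    simpa only [Nat.cast_zero, neg_zero, hx0] using
      spacing_mem_Icc_of_sum_abs_sub_le (s := fun n : ℕ => σ (x (-n))) hσlow hh (fun _ => hσ _)
        (sum_abs_sub_comp_neg_le hTV hx)
        hdm_pos (by simp [hdm0, hx0]) hrecL n
  intro k
  have hdp : dp k ∈ I := by
    rcases le_or_gt 0 k with hk | hk
    · exact hright k hk
    · rw [(hneg k (by omega)).2.1]
      exact hleft (k + 1) (by omega)
  have hdm : dm k ∈ I := by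
    rcases le_or_gt k 0 with hk | hk
    · exact hleft k hk
    · rw [(hpos k (by omega)).2.1]
      exact hright (k - 1) (by omega)
  exact ⟨hdp.1, hdp.2, hdm.1, hdm.2⟩
end
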